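/- Let m ≥ 1, n ≥ 2 be integers, let u, v¹, …, vᵐ : ℝ² → ℝ be smooth with v^k(x,t) > 0 for all (x,t), let (a_i)_{i≤n} be a Laurent family for Lⁿ, and suppose the Lax flow at level n holds. Then for every k = 1, …, m and every (x,t): v^k_t = Σ_{i=1}^n (−1)^{i−1}·( i·a_i·(v^k)^{i−1}·v^k_x + ∂_x a_i·(v^k)^i ). -/

import Mathlib

open Finset

/-- Partial derivative with respect to the first (space) variable. -/
noncomputable def pdx (f : ℝ → ℝ → ℝ) (x t : ℝ) : ℝ := deriv (fun y => f y t) x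

/-- Partial derivative with respect to the second (time) variable. -/
noncomputable def pdt (f : ℝ → ℝ → ℝ) (x t : ℝ) : ℝ := deriv (fun s => f x s) t

/-- The Lax function `L(x,t,p) = p + u + ∑_k ln(1 + v^k/p)`. -/
noncomputable def laxL (m : ℕ) (u : ℝ → ℝ → ℝ) (v : Fin m → ℝ → ℝ → ℝ)
    (x t p : ℝ) : ℝ :=
  p + u x t + ∑ k : Fin m, Real.log (1 + v k x t / p)

/-- A Laurent family for `Lⁿ`: smooth coefficients `a i` (integers `i ≤ n`,
encoded as `a : ℤ → ℝ → ℝ → ℝ` vanishing above `n`), with `a n = 1`, such that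
`Lⁿ = ∑_{i ≤ n} a_i pⁱ`, absolutely convergent for `p > 1 + max_k v^k`, and
termwise differentiable in `x` and in `t`. -/
structure LaurentFamily (m n : ℕ) (u : ℝ → ℝ → ℝ) (v : Fin m → ℝ → ℝ → ℝ)
    (a : ℤ → ℝ → ℝ → ℝ) : Prop where
  smooth : ∀ i, ContDiff ℝ (⊤ : ℕ∞) (fun q : ℝ × ℝ => a i q.1 q.2)
  top : ∀ x t, a n x t = 1
  vanish : ∀ i : ℤ, (n : ℤ) < i → ∀ x t, a i x t = 0
  abs_summable : ∀ x t p, (∀ k, 1 + v k x t < p) →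
    Summable (fun j : ℕ => |a ((n : ℤ) - j) x t * p ^ ((n : ℤ) - j)|)
  expansion : ∀ x t p, (∀ k, 1 + v k x t < p) →
    laxL m u v x t p ^ n = ∑' j : ℕ, a ((n : ℤ) - j) x t * p ^ ((n : ℤ) - j)
  abs_summable_x : ∀ x t p, (∀ k, 1 + v k x t < p) →
    Summable (fun j : ℕ => |pdx (a ((n : ℤ) - j)) x t * p ^ ((n : ℤ) - j)|)
  termwise_x : ∀ x t p, (∀ k, 1 + v k x t < p) →
    HasDerivAt (fun y => laxL m u v y t p ^ n)
      (∑' j : ℕ, pdx (a ((n : ℤ) - j)) x t * p ^ ((n : ℤ) - j)) x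
  abs_summable_t : ∀ x t p, (∀ k, 1 + v k x t < p) →
    Summable (fun j : ℕ => |pdt (a ((n : ℤ) - j)) x t * p ^ ((n : ℤ) - j)|)
  termwise_t : ∀ x t p, (∀ k, 1 + v k x t < p) →
    HasDerivAt (fun s => laxL m u v x s p ^ n)
      (∑' j : ℕ, pdt (a ((n : ℤ) - j)) x t * p ^ ((n : ℤ) - j)) t

/-- The Lax flow at level `n`: the identity `L_t = {(Lⁿ)_{≥1}, L}`, valid for
all `(x,t)` and all `p > 1 + max_k v^k(x,t)`. -/
def LaxFlow (m n : ℕ) (u : ℝ → ℝ → ℝ) (v : Fin m → ℝ → ℝ → ℝ)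
    (a : ℤ → ℝ → ℝ → ℝ) : Prop :=
  ∀ x t p, (∀ k, 1 + v k x t < p) →
    pdt u x t + ∑ k : Fin m, pdt (v k) x t / (p + v k x t) =
      (∑ i ∈ Icc 1 n, (i : ℝ) * a i x t * p ^ (i - 1)) *
          (pdx u x t + ∑ k : Fin m, pdx (v k) x t / (p + v k x t)) -
        (∑ i ∈ Icc 1 n, pdx (a i) x t * p ^ i) *
          (1 - ∑ k : Fin m, v k x t / (p * (p + v k x t)))


private lemma uncurry_hasDerivAt_x {f : ℝ → ℝ → ℝ}
    (hf : ContDiff ℝ (⊤ : ℕ∞) (fun q : ℝ × ℝ => f q.1 q.2)) (x t : ℝ) :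
    HasDerivAt (fun y => f y t)
      (fderiv ℝ (fun q : ℝ × ℝ => f q.1 q.2) (x, t) ((1 : ℝ), (0 : ℝ))) x := by
  have h1 := (hf.differentiable (by simp) (x, t)).hasFDerivAt
  have h2 : HasDerivAt (fun y : ℝ => ((y, t) : ℝ × ℝ)) ((1 : ℝ), (0 : ℝ)) x :=
    HasDerivAt.prodMk (hasDerivAt_id x) (hasDerivAt_const x t)
  exact h1.comp_hasDerivAt x h2

private lemma uncurry_hasDerivAt_t {f : ℝ → ℝ → ℝ}
    (hf : ContDiff ℝ (⊤ : ℕ∞) (fun q : ℝ × ℝ => f q.1 q.2)) (x t : ℝ) :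
    HasDerivAt (fun s => f x s)
      (fderiv ℝ (fun q : ℝ × ℝ => f q.1 q.2) (x, t) ((0 : ℝ), (1 : ℝ))) t := by
  have h1 := (hf.differentiable (by simp) (x, t)).hasFDerivAt
  have h2 : HasDerivAt (fun s : ℝ => ((x, s) : ℝ × ℝ)) ((0 : ℝ), (1 : ℝ)) t :=
    HasDerivAt.prodMk (hasDerivAt_const t x) (hasDerivAt_id t)
  exact h1.comp_hasDerivAt t h2

private lemma continuous_pdx' {f : ℝ → ℝ → ℝ}
    (hf : ContDiff ℝ (⊤ : ℕ∞) (fun q : ℝ × ℝ => f q.1 q.2)) :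
    Continuous fun q : ℝ × ℝ => pdx f q.1 q.2 := by
  have h : (fun q : ℝ × ℝ => pdx f q.1 q.2)
      = fun q : ℝ × ℝ => fderiv ℝ (fun q : ℝ × ℝ => f q.1 q.2) q ((1 : ℝ), (0 : ℝ)) := by
    funext q
    exact (uncurry_hasDerivAt_x hf q.1 q.2).deriv
  rw [h]
  exact (hf.continuous_fderiv (by simp)).clm_apply continuous_const

private lemma continuous_pdt' {f : ℝ → ℝ → ℝ}
    (hf : ContDiff ℝ (⊤ : ℕ∞) (fun q : ℝ × ℝ => f q.1 q.2)) :
    Continuous fun q : ℝ × ℝ => pdt f q.1 q.2 := by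
  have h : (fun q : ℝ × ℝ => pdt f q.1 q.2)
      = fun q : ℝ × ℝ => fderiv ℝ (fun q : ℝ × ℝ => f q.1 q.2) q ((0 : ℝ), (1 : ℝ)) := by
    funext q
    exact (uncurry_hasDerivAt_t hf q.1 q.2).deriv
  rw [h]
  exact (hf.continuous_fderiv (by simp)).clm_apply continuous_const

private lemma pdx_congr' {f g : ℝ → ℝ → ℝ} {x t : ℝ}
    (h : (fun q : ℝ × ℝ => f q.1 q.2) =ᶠ[nhds ((x, t) : ℝ × ℝ)] (fun q : ℝ × ℝ => g q.1 q.2)) :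
    pdx f x t = pdx g x t := by
  have hc : Continuous (fun y : ℝ => ((y, t) : ℝ × ℝ)) := by fun_prop
  have ht : Filter.Tendsto (fun y : ℝ => ((y, t) : ℝ × ℝ)) (nhds x) (nhds ((x, t) : ℝ × ℝ)) :=
    hc.tendsto x
  have h2 := h.comp_tendsto ht
  exact Filter.EventuallyEq.deriv_eq h2

private lemma pdt_congr' {f g : ℝ → ℝ → ℝ} {x t : ℝ}
    (h : (fun q : ℝ × ℝ => f q.1 q.2) =ᶠ[nhds ((x, t) : ℝ × ℝ)] (fun q : ℝ × ℝ => g q.1 q.2)) :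
    pdt f x t = pdt g x t := by
  have hc : Continuous (fun s : ℝ => ((x, s) : ℝ × ℝ)) := by fun_prop
  have ht : Filter.Tendsto (fun s : ℝ => ((x, s) : ℝ × ℝ)) (nhds t) (nhds ((x, t) : ℝ × ℝ)) :=
    hc.tendsto t
  have h2 := h.comp_tendsto ht
  exact Filter.EventuallyEq.deriv_eq h2

private lemma split_sum {m : ℕ} (V : Fin m → ℝ) (k : Fin m) (p : ℝ)
    (hne : ∀ j, p + V j ≠ 0) (g : Fin m → ℝ) :
    (p + V k) * (∏ l ∈ univ.filter (fun j => ¬ V j = V k), (p + V l)) *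
        (∑ j : Fin m, g j / (p + V j)) =
      (∏ l ∈ univ.filter (fun j => ¬ V j = V k), (p + V l)) *
          (∑ j ∈ univ.filter (fun j => V j = V k), g j)
        + (p + V k) * ∑ j ∈ univ.filter (fun j => ¬ V j = V k),
            (∏ l ∈ (univ.filter (fun j => ¬ V j = V k)).erase j, (p + V l)) * g j := by
  rw [Finset.mul_sum,
    ← Finset.sum_filter_add_sum_filter_not univ (fun j => V j = V k)]
  congr 1
  · rw [Finset.mul_sum]
    refine Finset.sum_congr rfl fun j hj => ?_
    have hjk : V j = V k := (Finset.mem_filter.mp hj).2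
    rw [hjk]
    rw [div_eq_mul_inv]
    field_simp [hne k]
  · rw [Finset.mul_sum]
    refine Finset.sum_congr rfl fun j hj => ?_
    rw [← Finset.mul_prod_erase _ _ hj]
    field_simp [hne j]

private lemma key_extract (m n : ℕ) (hm : 1 ≤ m)
    (V W Xv : Fin m → ℝ) (Ut Ux : ℝ) (ca da : ℕ → ℝ) (k : Fin m)
    (hVpos : ∀ j, 0 < V j)
    (hW : ∀ j, V j = V k → W j = W k) (hX : ∀ j, V j = V k → Xv j = Xv k)
    (hflow : ∀ p : ℝ, (∀ j, 1 + V j < p) →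
      Ut + ∑ j : Fin m, W j / (p + V j) =
        (∑ i ∈ Icc 1 n, ca i * p ^ (i - 1)) * (Ux + ∑ j : Fin m, Xv j / (p + V j)) -
        (∑ i ∈ Icc 1 n, da i * p ^ i) * (1 - ∑ j : Fin m, V j / (p * (p + V j)))) :
    W k = (∑ i ∈ Icc 1 n, ca i * (-V k) ^ (i - 1)) * Xv k -
          ∑ i ∈ Icc 1 n, da i * (-V k) ^ i := by
  have hCW : ∑ j ∈ univ.filter (fun j => V j = V k), W j =
      ((univ.filter (fun j : Fin m => V j = V k)).card : ℝ) * W k := by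
    rw [Finset.sum_congr rfl fun j hj => hW j (Finset.mem_filter.mp hj).2,
      Finset.sum_const, nsmul_eq_mul]
  have hCX : ∑ j ∈ univ.filter (fun j => V j = V k), Xv j =
      ((univ.filter (fun j : Fin m => V j = V k)).card : ℝ) * Xv k := by
    rw [Finset.sum_congr rfl fun j hj => hX j (Finset.mem_filter.mp hj).2,
      Finset.sum_const, nsmul_eq_mul]
  have hCV : ∑ j ∈ univ.filter (fun j => V j = V k), V j =
      ((univ.filter (fun j : Fin m => V j = V k)).card : ℝ) * V k := by
    rw [Finset.sum_congr rfl fun j hj => (Finset.mem_filter.mp hj).2,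
      Finset.sum_const, nsmul_eq_mul]
  set c : ℝ := ((univ.filter (fun j : Fin m => V j = V k)).card : ℝ) with hcdef
  set qq : Polynomial ℝ :=
    Polynomial.X * (Polynomial.X + Polynomial.C (V k)) *
          (∏ l ∈ univ.filter (fun j => ¬ V j = V k), (Polynomial.X + Polynomial.C (V l)))
        * (Polynomial.C Ut
            - (∑ i ∈ Icc 1 n, Polynomial.C (ca i) * Polynomial.X ^ (i - 1)) * Polynomial.C Ux
            + ∑ i ∈ Icc 1 n, Polynomial.C (da i) * Polynomial.X ^ i)
      + Polynomial.X *
          ((∏ l ∈ univ.filter (fun j => ¬ V j = V k), (Polynomial.X + Polynomial.C (V l))) *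
              Polynomial.C (c * W k)
            - (∑ i ∈ Icc 1 n, Polynomial.C (ca i) * Polynomial.X ^ (i - 1)) *
                ((∏ l ∈ univ.filter (fun j => ¬ V j = V k), (Polynomial.X + Polynomial.C (V l))) *
                  Polynomial.C (c * Xv k))
            + (Polynomial.X + Polynomial.C (V k)) *
                ∑ j ∈ univ.filter (fun j => ¬ V j = V k),
                  (∏ l ∈ (univ.filter (fun j => ¬ V j = V k)).erase j,
                    (Polynomial.X + Polynomial.C (V l))) * Polynomial.C (W j)
            - (∑ i ∈ Icc 1 n, Polynomial.C (ca i) * Polynomial.X ^ (i - 1)) *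
                ((Polynomial.X + Polynomial.C (V k)) *
                  ∑ j ∈ univ.filter (fun j => ¬ V j = V k),
                    (∏ l ∈ (univ.filter (fun j => ¬ V j = V k)).erase j,
                      (Polynomial.X + Polynomial.C (V l))) * Polynomial.C (Xv j)))
      - (∑ i ∈ Icc 1 n, Polynomial.C (da i) * Polynomial.X ^ i) *
          ((∏ l ∈ univ.filter (fun j => ¬ V j = V k), (Polynomial.X + Polynomial.C (V l))) *
              Polynomial.C (c * V k)
            + (Polynomial.X + Polynomial.C (V k)) *
                ∑ j ∈ univ.filter (fun j => ¬ V j = V k),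
                  (∏ l ∈ (univ.filter (fun j => ¬ V j = V k)).erase j,
                    (Polynomial.X + Polynomial.C (V l))) * Polynomial.C (V j))
    with hqq
  have heval : ∀ p : ℝ, qq.eval p =
      p * (p + V k) * (∏ l ∈ univ.filter (fun j => ¬ V j = V k), (p + V l)) *
          (Ut - (∑ i ∈ Icc 1 n, ca i * p ^ (i - 1)) * Ux + ∑ i ∈ Icc 1 n, da i * p ^ i)
        + p * ((∏ l ∈ univ.filter (fun j => ¬ V j = V k), (p + V l)) * (c * W k)
            - (∑ i ∈ Icc 1 n, ca i * p ^ (i - 1)) *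
                ((∏ l ∈ univ.filter (fun j => ¬ V j = V k), (p + V l)) * (c * Xv k))
            + (p + V k) * ∑ j ∈ univ.filter (fun j => ¬ V j = V k),
                (∏ l ∈ (univ.filter (fun j => ¬ V j = V k)).erase j, (p + V l)) * W j
            - (∑ i ∈ Icc 1 n, ca i * p ^ (i - 1)) *
                ((p + V k) * ∑ j ∈ univ.filter (fun j => ¬ V j = V k),
                  (∏ l ∈ (univ.filter (fun j => ¬ V j = V k)).erase j, (p + V l)) * Xv j))
        - (∑ i ∈ Icc 1 n, da i * p ^ i) *
            ((∏ l ∈ univ.filter (fun j => ¬ V j = V k), (p + V l)) * (c * V k)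
              + (p + V k) * ∑ j ∈ univ.filter (fun j => ¬ V j = V k),
                  (∏ l ∈ (univ.filter (fun j => ¬ V j = V k)).erase j, (p + V l)) * V j) := by
    intro p
    simp [hqq, Polynomial.eval_finset_sum, Polynomial.eval_prod]
  have claimA : ∀ p : ℝ, (∀ j, 1 + V j < p) → qq.eval p = 0 := by
    intro p hp
    have hppos : (0 : ℝ) < p := by
      have h1 := hVpos ⟨0, hm⟩
      have h2 := hp ⟨0, hm⟩
      linarith
    have hp0 : p ≠ 0 := hppos.ne'
    have hpj : ∀ j, p + V j ≠ 0 := fun j => by have := hVpos j; positivity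
    have key := hflow p hp
    have hSV : (∑ j : Fin m, V j / (p * (p + V j))) = (∑ j : Fin m, V j / (p + V j)) * p⁻¹ := by
      rw [Finset.sum_mul]
      refine Finset.sum_congr rfl fun j _ => ?_
      rw [mul_comm p (p + V j), ← div_div, div_eq_mul_inv]
    rw [hSV] at key
    have hinv : p * ((∑ j : Fin m, V j / (p + V j)) * p⁻¹) = ∑ j : Fin m, V j / (p + V j) := by
      field_simp
    have e1 := split_sum V k p hpj W
    rw [hCW] at e1
    have e2 := split_sum V k p hpj Xv
    rw [hCX] at e2
    have e3 := split_sum V k p hpj V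
    rw [hCV] at e3
    rw [heval p]
    linear_combination
      (p * (p + V k) * (∏ l ∈ univ.filter (fun j => ¬ V j = V k), (p + V l))) * key
      - p * e1
      + (p * (∑ i ∈ Icc 1 n, ca i * p ^ (i - 1))) * e2
      + (∑ i ∈ Icc 1 n, da i * p ^ i) * e3
      + ((p + V k) * (∏ l ∈ univ.filter (fun j => ¬ V j = V k), (p + V l)) *
          (∑ i ∈ Icc 1 n, da i * p ^ i)) * hinv
  have hqz : qq = 0 := by
    apply Polynomial.eq_zero_of_infinite_isRoot
    apply Set.Infinite.mono (s := Set.Ioi (1 + ∑ j : Fin m, V j))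
    · intro p hp
      have hcond : ∀ j, 1 + V j < p := by
        intro j
        have hle : V j ≤ ∑ j : Fin m, V j :=
          Finset.single_le_sum (fun j _ => (hVpos j).le) (Finset.mem_univ j)
        have := Set.mem_Ioi.mp hp
        linarith
      exact claimA p hcond
    · exact Set.Ioi_infinite _
  have h0 := heval (-V k)
  rw [hqz, Polynomial.eval_zero] at h0
  have hprod : (∏ l ∈ univ.filter (fun j => ¬ V j = V k), (-V k + V l)) ≠ 0 := by
    rw [Finset.prod_ne_zero_iff]
    intro l hl
    have hne : ¬ V l = V k := (Finset.mem_filter.mp hl).2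
    intro hcontra
    exact hne (by linarith)
  have hc0 : c ≠ 0 := by
    have hk : k ∈ univ.filter (fun j : Fin m => V j = V k) :=
      Finset.mem_filter.mpr ⟨Finset.mem_univ k, rfl⟩
    have : 0 < (univ.filter (fun j : Fin m => V j = V k)).card :=
      Finset.card_pos.mpr ⟨k, hk⟩
    rw [hcdef]
    exact_mod_cast this.ne'
  have hVk0 : V k ≠ 0 := (hVpos k).ne'
  have h1 : (∏ l ∈ univ.filter (fun j => ¬ V j = V k), (-V k + V l)) * (c * V k) *
      (W k - ((∑ i ∈ Icc 1 n, ca i * (-V k) ^ (i - 1)) * Xv k -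
        ∑ i ∈ Icc 1 n, da i * (-V k) ^ i)) = 0 := by
    linear_combination h0
  rcases mul_eq_zero.mp h1 with h | h
  · exact absurd h (mul_ne_zero hprod (mul_ne_zero hc0 hVk0))
  · exact sub_eq_zero.mp h


/-- if the Lax flow at level `n` holds, then
`v^k_t = ∑_{i=1}^n (-1)^{i-1} (i a_i (v^k)^{i-1} v^k_x + a_{i,x} (v^k)^i)`. -/
theorem statement4 (m n : ℕ) (hm : 1 ≤ m) (hn : 2 ≤ n)
    (u : ℝ → ℝ → ℝ) (v : Fin m → ℝ → ℝ → ℝ)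
    (hu : ContDiff ℝ (⊤ : ℕ∞) (fun q : ℝ × ℝ => u q.1 q.2))
    (hv : ∀ k, ContDiff ℝ (⊤ : ℕ∞) (fun q : ℝ × ℝ => v k q.1 q.2))
    (hvpos : ∀ k x t, 0 < v k x t)
    (a : ℤ → ℝ → ℝ → ℝ)
    (hLF : LaurentFamily m n u v a)
    (hflow : LaxFlow m n u v a) :
    ∀ (k : Fin m) (x t : ℝ),
      pdt (v k) x t = ∑ i ∈ Finset.Icc 1 n, (-1 : ℝ) ^ (i - 1) *
        ((i : ℝ) * a i x t * v k x t ^ (i - 1) * pdx (v k) x t +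
          pdx (a i) x t * v k x t ^ i) := by
  intro k x t
  have hflow' : ∀ x t p, (∀ j, 1 + v j x t < p) →
      pdt u x t + ∑ j : Fin m, pdt (v j) x t / (p + v j x t) =
        (∑ i ∈ Icc 1 n, (i : ℝ) * a i x t * p ^ (i - 1)) *
            (pdx u x t + ∑ j : Fin m, pdx (v j) x t / (p + v j x t)) -
          (∑ i ∈ Icc 1 n, pdx (a i) x t * p ^ i) *
            (1 - ∑ j : Fin m, v j x t / (p * (p + v j x t))) := hflow
  have hvtc : Continuous fun q : ℝ × ℝ => pdt (v k) q.1 q.2 := continuous_pdt' (hv k)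
  have hGc : Continuous fun q : ℝ × ℝ => ∑ i ∈ Finset.Icc 1 n, (-1 : ℝ) ^ (i - 1) *
      ((i : ℝ) * a i q.1 q.2 * v k q.1 q.2 ^ (i - 1) * pdx (v k) q.1 q.2 +
        pdx (a i) q.1 q.2 * v k q.1 q.2 ^ i) := by
    apply continuous_finset_sum
    intro i _
    exact continuous_const.mul
      ((((continuous_const.mul (hLF.smooth i).continuous).mul
          (((hv k).continuous).pow _)).mul (continuous_pdx' (hv k))).add
        ((continuous_pdx' (hLF.smooth i)).mul (((hv k).continuous).pow _)))
  have hSclosed : ∀ j : Fin m, IsClosed {q : ℝ × ℝ | v j q.1 q.2 = v k q.1 q.2} :=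
    fun j => isClosed_eq (hv j).continuous (hv k).continuous
  have hdense : Dense (⋂ j : Fin m, (frontier {q : ℝ × ℝ | v j q.1 q.2 = v k q.1 q.2})ᶜ) := by
    apply dense_iInter_of_isOpen
    · exact fun j => isClosed_frontier.isOpen_compl
    · exact fun j => interior_eq_empty_iff_dense_compl.mp (interior_frontier (hSclosed j))
  have main : Set.EqOn (fun q : ℝ × ℝ => pdt (v k) q.1 q.2)
      (fun q : ℝ × ℝ => ∑ i ∈ Finset.Icc 1 n, (-1 : ℝ) ^ (i - 1) *
        ((i : ℝ) * a i q.1 q.2 * v k q.1 q.2 ^ (i - 1) * pdx (v k) q.1 q.2 +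
          pdx (a i) q.1 q.2 * v k q.1 q.2 ^ i))
      (⋂ j : Fin m, (frontier {q : ℝ × ℝ | v j q.1 q.2 = v k q.1 q.2})ᶜ) := by
    rintro ⟨x₀, t₀⟩ hq
    simp only [Set.mem_iInter] at hq
    have hnice : ∀ j : Fin m, v j x₀ t₀ = v k x₀ t₀ →
        pdt (v j) x₀ t₀ = pdt (v k) x₀ t₀ ∧ pdx (v j) x₀ t₀ = pdx (v k) x₀ t₀ := by
      intro j hj
      have hq' := hq j
      have hmem : ((x₀, t₀) : ℝ × ℝ) ∈ {q : ℝ × ℝ | v j q.1 q.2 = v k q.1 q.2} := hj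
      have hint : ((x₀, t₀) : ℝ × ℝ) ∈ interior {q : ℝ × ℝ | v j q.1 q.2 = v k q.1 q.2} := by
        by_contra hint
        exact hq' ⟨subset_closure hmem, hint⟩
      have hev : (fun q : ℝ × ℝ => v j q.1 q.2) =ᶠ[nhds ((x₀, t₀) : ℝ × ℝ)]
          (fun q : ℝ × ℝ => v k q.1 q.2) := by
        have hnh : {q : ℝ × ℝ | v j q.1 q.2 = v k q.1 q.2} ∈ nhds ((x₀, t₀) : ℝ × ℝ) :=
          mem_interior_iff_mem_nhds.mp hint
        exact Filter.eventually_of_mem hnh fun q hq => hq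
      exact ⟨pdt_congr' hev, pdx_congr' hev⟩
    have hk : pdt (v k) x₀ t₀ =
        (∑ i ∈ Icc 1 n, (i : ℝ) * a i x₀ t₀ * (-v k x₀ t₀) ^ (i - 1)) * pdx (v k) x₀ t₀ -
          ∑ i ∈ Icc 1 n, pdx (a i) x₀ t₀ * (-v k x₀ t₀) ^ i :=
      key_extract m n hm (fun j => v j x₀ t₀) (fun j => pdt (v j) x₀ t₀)
        (fun j => pdx (v j) x₀ t₀) (pdt u x₀ t₀) (pdx u x₀ t₀)
        (fun i => (i : ℝ) * a i x₀ t₀) (fun i => pdx (a i) x₀ t₀) k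
        (fun j => hvpos j x₀ t₀)
        (fun j hj => (hnice j hj).1) (fun j hj => (hnice j hj).2)
        (fun p hp => hflow' x₀ t₀ p hp)
    show pdt (v k) x₀ t₀ = _
    rw [hk, Finset.sum_mul, ← Finset.sum_sub_distrib]
    refine Finset.sum_congr rfl fun i hi => ?_
    have h1 : 1 ≤ i := (Finset.mem_Icc.mp hi).1
    obtain ⟨j, rfl⟩ := Nat.exists_eq_add_of_le h1
    rw [Nat.add_sub_cancel_left, neg_pow, neg_pow]
    ring
  have hfin := Continuous.ext_on hdense hvtc hGc main
  exact congrFun hfin (x, t)
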